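/- arXiv:1405.6899 — 2 statements merged into one kernel-verified Lean document; each statement's English description precedes it below -/
import Mathlib

section
/- Let A and B be finite sets of agents with B ⊆ 𝒜, and let k be the number of actions at state q. Then F is an (η↾A)-compatible B-profile at q if and only if there exist F₁ a partial profile for B \ A (i.e., F₁ : Fin k → ℕ with ∑ F₁ i = |B \ A|) and F₂ an (η↾A)-compatible (A ∩ B)-profile at q such that F = F₁ + F₂ (coordinatewise addition). -/
variable {𝒜 : Type*} [DecidableEq 𝒜] {k : ℕ}

/-- Restriction of the normative system (at a fixed state) to coalition `A`. -/
def restrict (η : 𝒜 → Finset (Fin k)) (A : Finset 𝒜) (a : 𝒜) : Finset (Fin k) :=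
  if a ∈ A then η a else ∅

/-- `F` is an `(η↾A)`-compatible `B`-profile: it is induced by some `B`-action
avoiding the restricted forbidden sets. -/
def CompatProfile (η : 𝒜 → Finset (Fin k)) (A B : Finset 𝒜) (F : Fin k → ℕ) : Prop :=
  ∃ ρ : 𝒜 → Fin k, (∀ b ∈ B, ρ b ∉ restrict η A b) ∧
    ∀ i : Fin k, F i = (B.filter (fun b => ρ b = i)).card

/-! On `B \ A` the restricted system forbids nothing, so a compatible `B`-action splits into an
arbitrary action there and a compatible action on `A ∩ B`, and profiles add over the disjoint
union. Conversely, any partial profile `F₁` for `B \ A` is realised by an action read off a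
bijection `B \ A ≃ Σ i, Fin (F₁ i)`, which is then glued to a compatible action on `A ∩ B`. -/

section Profile

open Finset

variable {α ι : Type*} [DecidableEq ι]

def profile (ρ : α → ι) (S : Finset α) (i : ι) : ℕ := #{a ∈ S | ρ a = i}

lemma sum_profile [Fintype ι] (ρ : α → ι) (S : Finset α) : ∑ i, profile ρ S i = #S :=
  (card_eq_sum_card_fiberwise fun a _ => mem_univ (ρ a)).symm

lemma profile_union [DecidableEq α] (ρ : α → ι) {S T : Finset α} (h : Disjoint S T) :
    profile ρ (S ∪ T) = profile ρ S + profile ρ T := by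
  funext i
  simp only [profile, Pi.add_apply, filter_union]
  exact card_union_of_disjoint (disjoint_filter_filter h)

lemma profile_congr {ρ ρ' : α → ι} {S : Finset α} (h : ∀ a ∈ S, ρ a = ρ' a) :
    profile ρ S = profile ρ' S := by
  funext i
  simp only [profile]
  congr 1
  exact filter_congr fun a ha => by rw [h a ha]

lemma profile_eq_card_subtype (ρ : α → ι) {S : Finset α} (f : S → ι) (hf : ∀ a : S, f a = ρ a)
    (i : ι) : profile ρ S i = Fintype.card {a : S // f a = i} := by
  rw [profile, Fintype.card_subtype, ← card_map (Function.Embedding.subtype _)]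
  congr 1
  ext a
  simp [hf, and_comm]

lemma exists_profile_eq [Fintype ι] [DecidableEq α] (ρ₀ : α → ι) {S : Finset α} {G : ι → ℕ}
    (hG : ∑ i, G i = #S) : ∃ ρ : α → ι, (∀ a ∉ S, ρ a = ρ₀ a) ∧ profile ρ S = G := by
  let e : S ≃ Σ i, Fin (G i) := Fintype.equivOfCardEq (by simp [hG])
  refine ⟨fun a => if h : a ∈ S then (e ⟨a, h⟩).1 else ρ₀ a, fun a ha => dif_neg ha, ?_⟩
  funext i
  calc profile _ S i = Fintype.card {a : S // (e a).1 = i} :=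
        profile_eq_card_subtype _ _ (fun a => by rw [dif_pos a.2]) i
    _ = Fintype.card {x : Σ i, Fin (G i) // x.1 = i} :=
        Fintype.card_congr (e.subtypeEquiv fun _ => Iff.rfl)
    _ = G i := by rw [Fintype.card_congr (Equiv.sigmaSubtype i), Fintype.card_fin]

end Profile

lemma compatProfile_iff_exists_profile (η : 𝒜 → Finset (Fin k)) (A B : Finset 𝒜)
    (F : Fin k → ℕ) :
    CompatProfile η A B F ↔
      ∃ ρ : 𝒜 → Fin k, (∀ b ∈ B, ρ b ∉ restrict η A b) ∧ profile ρ B = F :=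
  exists_congr fun _ => and_congr_right' <| by rw [eq_comm, funext_iff]; rfl

/-- Proposition 1: `F` is an `(η↾A)`-compatible `B`-profile iff `F = F₁ + F₂`
for some partial profile `F₁` for `B \ A` and some `(η↾A)`-compatible
`(A ∩ B)`-profile `F₂`. -/
theorem compatProfile_iff_add (η : 𝒜 → Finset (Fin k)) (A B : Finset 𝒜)
    (F : Fin k → ℕ) :
    CompatProfile η A B F ↔
      ∃ F₁ F₂ : Fin k → ℕ, (∑ i, F₁ i = (B \ A).card) ∧
        CompatProfile η A (A ∩ B) F₂ ∧ F = F₁ + F₂ := by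
  have hsplit : B = (B \ A) ∪ (A ∩ B) := by rw [Finset.inter_comm, Finset.sdiff_union_inter]
  have hdisj : Disjoint (B \ A) (A ∩ B) :=
    Finset.sdiff_disjoint.mono_right Finset.inter_subset_left
  simp only [compatProfile_iff_exists_profile]
  constructor
  · rintro ⟨ρ, hρ, rfl⟩
    refine ⟨profile ρ (B \ A), profile ρ (A ∩ B), sum_profile ρ _,
      ⟨ρ, fun b hb => hρ b (Finset.mem_of_mem_inter_right hb), rfl⟩, ?_⟩
    conv_lhs => rw [hsplit]
    exact profile_union ρ hdisj
  · rintro ⟨F₁, F₂, hF₁, ⟨ρ₂, hρ₂, rfl⟩, rfl⟩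
    obtain ⟨ρ, hρ_off, rfl⟩ := exists_profile_eq ρ₂ hF₁
    have hagree : ∀ a ∈ A ∩ B, ρ a = ρ₂ a := fun a ha =>
      hρ_off a (Finset.disjoint_right.mp hdisj ha)
    refine ⟨ρ, fun b hb => ?_, ?_⟩
    · by_cases hbA : b ∈ A
      · rw [hagree b (Finset.mem_inter_of_mem hbA hb)]
        exact hρ₂ b (Finset.mem_inter_of_mem hbA hb)
      · simp [restrict, hbA]
    · rw [← profile_congr hagree, ← profile_union ρ hdisj, ← hsplit]
end

section
/- If F₂ : Fin k → ℕ is an (η↾A)-compatible (A ∩ B)-profile at q and F₁ : Fin k → ℕ is any partial profile for B \ A at q (∑ F₁ i = |B \ A|), then F₁ + F₂ is an (η↾A)-compatible B-profile at q. -/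
variable {𝒜 : Type*} [DecidableEq 𝒜] {k : ℕ}

/-!
Keep the compatible assignment on `A ∩ B` and redistribute the agents of `B \ A` freely so
that their fibre sizes are `F₁`: this is possible because `∑ F₁ = |B \ A|`, and it is
compatible because `η↾A` forbids nothing to agents outside `A`.
-/

open Finset

theorem Finset.card_filter_eq_card_subtype {α : Type*} (s : Finset α) (p : α → Prop)
    [DecidablePred p] : #(s.filter p) = Fintype.card {x : s // p x} := by
  rw [Fintype.card_subtype, ← card_map (Function.Embedding.subtype _)]
  congr 1
  ext a
  simp [and_comm]

theorem Finset.exists_eqOn_compl_card_filter_eq {α ι : Type*} [Fintype ι] [DecidableEq ι]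
    (s : Finset α) (F : ι → ℕ) (hF : ∑ i, F i = #s) (ρ₀ : α → ι) :
    ∃ ρ : α → ι, (∀ a ∉ s, ρ a = ρ₀ a) ∧ ∀ i, #(s.filter (ρ · = i)) = F i := by
  classical
  obtain ⟨e⟩ : Nonempty (s ≃ Σ i, Fin (F i)) := Fintype.card_eq.mp (by simp [hF])
  set ρ : α → ι := fun a => if h : a ∈ s then (e ⟨a, h⟩).1 else ρ₀ a
  have hρ : ∀ x : s, ρ x = (e x).1 := fun x => dif_pos x.2
  refine ⟨ρ, fun a ha => dif_neg ha, fun i => ?_⟩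
  calc #(s.filter (ρ · = i)) = Fintype.card {x : s // (e x).1 = i} := by
        simp only [card_filter_eq_card_subtype, hρ]
    _ = Fintype.card {p : Σ j, Fin (F j) // p.1 = i} :=
        Fintype.card_congr (e.subtypeEquiv fun _ => Iff.rfl)
    _ = F i := by rw [Fintype.card_congr (Equiv.sigmaSubtype i), Fintype.card_fin]

theorem Finset.card_filter_eq_card_filter_sdiff_add_card_filter_inter {α : Type*}
    [DecidableEq α] (A B : Finset α) (p : α → Prop) [DecidablePred p] :
    #(B.filter p) = #((B \ A).filter p) + #((A ∩ B).filter p) := by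
  rw [inter_comm A B,
    ← card_union_of_disjoint (disjoint_filter_filter (disjoint_sdiff_inter B A)),
    ← filter_union, sdiff_union_inter]

theorem restrict_eq_empty_of_notMem (η : 𝒜 → Finset (Fin k)) {A : Finset 𝒜} {a : 𝒜}
    (ha : a ∉ A) : restrict η A a = ∅ :=
  if_neg ha

/-- The easy direction of Proposition 1: adding any partial profile for `B \ A` to an
`(η↾A)`-compatible `(A ∩ B)`-profile gives an `(η↾A)`-compatible `B`-profile. -/
theorem add_compatProfile (η : 𝒜 → Finset (Fin k)) (A B : Finset 𝒜)
    (F₁ F₂ : Fin k → ℕ) (hF₁ : ∑ i, F₁ i = (B \ A).card)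
    (hF₂ : CompatProfile η A (A ∩ B) F₂) :
    CompatProfile η A B (F₁ + F₂) := by
  obtain ⟨ρ₂, hρ₂, hF₂⟩ := hF₂
  obtain ⟨ρ, hρ_off, hF₁⟩ := (B \ A).exists_eqOn_compl_card_filter_eq F₁ hF₁ ρ₂
  have hρ_inter : ∀ a ∈ A ∩ B, ρ a = ρ₂ a := fun a ha =>
    hρ_off a fun h => (mem_sdiff.mp h).2 (mem_inter.mp ha).1
  refine ⟨ρ, fun b hb => ?_, fun i => ?_⟩
  · by_cases hbA : b ∈ A
    · rw [hρ_inter b (mem_inter.mpr ⟨hbA, hb⟩)]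
      exact hρ₂ b (mem_inter.mpr ⟨hbA, hb⟩)
    · simp [restrict_eq_empty_of_notMem η hbA]
  · rw [card_filter_eq_card_filter_sdiff_add_card_filter_inter A, hF₁, Pi.add_apply, hF₂,
      filter_congr (p := (ρ · = i)) (q := (ρ₂ · = i)) fun a ha => by rw [hρ_inter a ha]]
end
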